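/- Let R and S be Dyck paths of the same length 2n, both avoiding three consecutive north steps NNN, and let P = φ(R), Q = φ(S) be the corresponding Motzkin paths. Then Q covers P in the partial order on Motzkin paths if and only if S covers R in the Tamari order on Dyck paths and Type(R) = Type(S). -/

import Mathlib

/-- Steps: north `N = (0,1)`, east `E = (1,0)`, diagonal `D = (1,1)`. -/
inductive MStep : Type
  | N | E | D
  deriving DecidableEq

/-- The contribution of a step to the height `y - x` above the diagonal. -/
def MStep.hdiff : MStep → ℤ
  | .N => 1
  | .E => -1
  | .D => 0

/-- The total height change `y - x` along a word of steps. -/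
def wsum (p : List MStep) : ℤ := (p.map MStep.hdiff).sum

/-- A (nonempty) Motzkin path: starts at the origin, never goes below the
diagonal `y = x`, and ends on the diagonal. -/
def IsMotzkin (p : List MStep) : Prop :=
  p ≠ [] ∧ (∀ q, q <+: p → 0 ≤ wsum q) ∧ wsum p = 0

/-- A Dyck path is a Motzkin path with no diagonal step. -/
def IsDyck (p : List MStep) : Prop := IsMotzkin p ∧ MStep.D ∉ p

/-- A path is primitive if it touches the diagonal only at its endpoints. -/
def IsPrimitive (p : List MStep) : Prop :=
  IsMotzkin p ∧ ∀ q, q <+: p → q ≠ [] → q ≠ p → 0 < wsum q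

/-- Covering relation for the Tamari-type order on Motzkin paths:
`Q` covers `P` iff `P = P₁·E·P₂·P₃` and `Q = P₁·P₂·E·P₃` with `P₂` a nonempty
primitive Motzkin path. -/
def MCover (P Q : List MStep) : Prop :=
  ∃ P₁ P₂ P₃ : List MStep, IsMotzkin P₂ ∧ IsPrimitive P₂ ∧
    P = P₁ ++ [MStep.E] ++ P₂ ++ P₃ ∧ Q = P₁ ++ P₂ ++ [MStep.E] ++ P₃

/-- Covering relation of the Tamari order on Dyck paths. -/
def DCover (P Q : List MStep) : Prop :=
  ∃ P₁ P₂ P₃ : List MStep, IsDyck P₂ ∧ IsPrimitive P₂ ∧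
    P = P₁ ++ [MStep.E] ++ P₂ ++ P₃ ∧ Q = P₁ ++ P₂ ++ [MStep.E] ++ P₃

/-- The partial order `≤_M` on Motzkin paths. -/
def MLE : List MStep → List MStep → Prop := Relation.ReflTransGen MCover

/-- The Tamari order `≤_D` on Dyck paths. -/
def DLE : List MStep → List MStep → Prop := Relation.ReflTransGen DCover

/-- Heights of the diagonal steps along a path, starting from height `h`. -/
def clsFrom : List MStep → ℤ → List ℤ
  | [], _ => []
  | .N :: rest, h => clsFrom rest (h + 1)
  | .E :: rest, h => clsFrom rest h
  | .D :: rest, h => (h + 1) :: clsFrom rest (h + 1)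

/-- The class of a Motzkin path: the sequence of heights (ending `y`-coordinates)
of its diagonal steps, in the order they occur. -/
def cls (p : List MStep) : List ℤ := clsFrom p 0

/-- A path avoids `NNN` if it has no three consecutive north steps. -/
def AvoidsNNN (p : List MStep) : Prop := ¬ ([MStep.N, MStep.N, MStep.N] <:+: p)

/-- Callan's bijection `φ`: replace each factor `NE` by `D` and each factor
`NNE` by `N`, leaving remaining east steps unchanged. -/
def phi : List MStep → List MStep
  | [] => []
  | .N :: .N :: .E :: rest => .N :: phi rest
  | .N :: .E :: rest => .D :: phi rest
  | s :: rest => s :: phi rest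

/-- The inverse of `φ`: replace each `D` by `NE` and each `N` by `NNE`. -/
def psi : List MStep → List MStep
  | [] => []
  | .N :: rest => .N :: .N :: .E :: psi rest
  | .D :: rest => .N :: .E :: psi rest
  | .E :: rest => .E :: psi rest

/-- For each north step of the path (in order), record `N` if it is immediately
followed by an east step and `E` otherwise. -/
def typeRaw : List MStep → List MStep
  | [] => []
  | .N :: rest => (if rest.head? = some MStep.E then MStep.N else MStep.E) :: typeRaw rest
  | _ :: rest => typeRaw rest

/-- The type of a Dyck path of length `2n`: the word of length `n - 1` whose
`i`-th letter is `N` iff the `i`-th north step is immediately followed by an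
east step (the letter of the last north step is dropped). -/
def typeW (p : List MStep) : List MStep := (typeRaw p).dropLast

/-- `ds p` is the number of north steps of `p` that are neither immediately
preceded nor immediately followed by another north step. -/
def ds (p : List MStep) : ℕ :=
  ((Finset.range p.length).filter (fun i =>
    p[i]? = some MStep.N ∧ p[i + 1]? ≠ some MStep.N ∧
      (i = 0 ∨ p[i - 1]? ≠ some MStep.N))).card

/-- The number of contacts of a path with the diagonal `y = x` (lattice points
of the path lying on the diagonal, endpoints included). -/
def cont (p : List MStep) : ℕ :=
  ((Finset.range (p.length + 1)).filter (fun i => wsum (p.take i) = 0)).card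

/-!
`psi` inverts `phi` on NNN-avoiding Dyck paths, is a monoid morphism for concatenation, and
preserves and reflects the Motzkin and primitivity conditions, since a block `NNE`, `NE` or `E`
does not go below its starting height before its last step. Hence a Motzkin cover
`A·E·B·C ⋖ A·B·E·C` pulls back to the Dyck cover `ψA·E·ψB·ψC ⋖ ψA·ψB·E·ψC`, and the type, computed
blockwise along `ψ` (`NNE ↦ EN`, `NE ↦ N`, `E ↦ ε`), is unchanged. Conversely a Dyck cover
`P₁·E·P₂·P₃ ⋖ P₁·P₂·E·P₃` is the image under `ψ` of a Motzkin cover unless `P₁` ends with `N`; then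
the letter of that north step changes from `N` to `E`, and it is not the dropped last letter of
the type because `P₂` starts with another north step.
-/

open MStep

@[simp] lemma wsum_nil : wsum [] = 0 := rfl

@[simp] lemma wsum_cons (a : MStep) (l : List MStep) : wsum (a :: l) = a.hdiff + wsum l := by
  simp [wsum]

@[simp] lemma wsum_append (u v : List MStep) : wsum (u ++ v) = wsum u + wsum v := by
  simp [wsum]

@[simp] lemma psi_append (u v : List MStep) : psi (u ++ v) = psi u ++ psi v := by
  induction u with
  | nil => rfl
  | cons a u ih => cases a <;> simp [psi, ih]

@[simp] lemma wsum_psi (l : List MStep) : wsum (psi l) = wsum l := by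
  induction l with
  | nil => rfl
  | cons a l ih => cases a <;> simp [psi, hdiff, ih]

@[simp] lemma psi_eq_nil_iff {l : List MStep} : psi l = [] ↔ l = [] := by
  cases l with
  | nil => simp [psi]
  | cons a l => cases a <;> simp [psi]

lemma D_not_mem_psi (l : List MStep) : D ∉ psi l := by
  induction l with
  | nil => simp [psi]
  | cons a l ih => cases a <;> simp [psi, ih]

@[simp] lemma phi_psi (l : List MStep) : phi (psi l) = l := by
  induction l with
  | nil => rfl
  | cons a l ih => cases a <;> simp [psi, phi, ih]

lemma IsMotzkin.not_suffix_N {p : List MStep} (hp : IsMotzkin p) : ¬ [N] <:+ p := by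
  rintro ⟨l, rfl⟩
  obtain ⟨-, hpre, hsum⟩ := hp
  have := hpre l (List.prefix_append l [N])
  simp [hdiff] at hsum
  omega

lemma AvoidsNNN.of_infix {v w : List MStep} (hw : AvoidsNNN w) (hv : v <:+: w) : AvoidsNNN v :=
  fun h => hw (h.trans hv)

/-- The three hypotheses say that `w` is a word in the blocks `NNE`, `NE` and `E`. -/
theorem psi_phi : ∀ w : List MStep, D ∉ w → AvoidsNNN w → ¬ [N] <:+ w → psi (phi w) = w
  | [], _, _, _ => rfl
  | E :: w, hD, hA, hL => congrArg ([E] ++ ·) <|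
      psi_phi w (by simp_all) (hA.of_infix (List.suffix_append [E] w).isInfix)
        fun h => hL (h.trans (List.suffix_append [E] w))
  | N :: E :: w, hD, hA, hL => congrArg ([N, E] ++ ·) <|
      psi_phi w (by simp_all) (hA.of_infix (List.suffix_append [N, E] w).isInfix)
        fun h => hL (h.trans (List.suffix_append [N, E] w))
  | N :: N :: E :: w, hD, hA, hL => congrArg ([N, N, E] ++ ·) <|
      psi_phi w (by simp_all) (hA.of_infix (List.suffix_append [N, N, E] w).isInfix)
        fun h => hL (h.trans (List.suffix_append [N, N, E] w))
  | D :: _, hD, _, _ => absurd (List.mem_cons_self ..) hD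
  | [N], _, _, hL => absurd (List.suffix_refl _) hL
  | [N, N], _, _, hL => absurd (List.suffix_cons _ _) hL
  | N :: D :: _, hD, _, _ => by simp at hD
  | N :: N :: D :: _, hD, _, _ => by simp at hD
  | N :: N :: N :: w, _, hA, _ => absurd (List.infix_append [] [N, N, N] w) hA

lemma psi_prefix_psi {u B : List MStep} (h : u <+: B) : psi u <+: psi B := by
  obtain ⟨r, rfl⟩ := h
  exact ⟨psi r, (psi_append u r).symm⟩

lemma eq_nil_or_wsum_pos_of_prefix_psi_singleton {q : List MStep} (b : MStep)
    (hq : q <+: psi [b]) (hne : ¬ psi [b] <+: q) : q = [] ∨ 0 < wsum q := by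
  cases b <;> simp_all [psi, List.prefix_cons_iff] <;> aesop (add norm hdiff)

/-- Here `r` is a proper prefix of the block `psi [b]` of the letter `b` following `u` in `B`. -/
lemma exists_psi_append_of_prefix_psi {q B : List MStep} (hq : q <+: psi B) :
    ∃ u r, u <+: B ∧ q = psi u ++ r ∧ (r = [] ∨ 0 < wsum r) := by
  induction B generalizing q with
  | nil =>
    refine ⟨[], q, List.nil_prefix, rfl, .inl ?_⟩
    simpa [psi] using hq
  | cons b B ih =>
    rw [show b :: B = [b] ++ B from rfl, psi_append] at hq
    by_cases hb : psi [b] <+: q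
    · obtain ⟨q', rfl⟩ := hb
      obtain ⟨u, r, hu, rfl, hr⟩ := ih ((List.prefix_append_right_inj _).mp hq)
      refine ⟨b :: u, r, List.cons_prefix_cons.mpr ⟨rfl, hu⟩, ?_, hr⟩
      rw [← List.append_assoc, ← psi_append]
      rfl
    · have hq' := ((List.prefix_or_prefix_of_prefix hq (List.prefix_append _ _)).resolve_right hb)
      exact ⟨[], q, List.nil_prefix, rfl, eq_nil_or_wsum_pos_of_prefix_psi_singleton b hq' hb⟩

lemma isMotzkin_psi_iff {B : List MStep} : IsMotzkin (psi B) ↔ IsMotzkin B := by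
  refine ⟨fun ⟨hne, hpre, hsum⟩ => ⟨by simpa using hne, fun u hu => ?_, by simpa using hsum⟩,
    fun ⟨hne, hpre, hsum⟩ => ⟨by simpa using hne, fun q hq => ?_, by simpa using hsum⟩⟩
  · simpa using hpre _ (psi_prefix_psi hu)
  · obtain ⟨u, r, hu, rfl, hr⟩ := exists_psi_append_of_prefix_psi hq
    have := hpre u hu
    rcases hr with rfl | hr <;> simp <;> omega

lemma isPrimitive_psi_iff {B : List MStep} : IsPrimitive (psi B) ↔ IsPrimitive B := by
  refine ⟨fun ⟨hM, hpos⟩ => ⟨isMotzkin_psi_iff.mp hM, fun u hu hne hB => ?_⟩,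
    fun ⟨hM, hpos⟩ => ⟨isMotzkin_psi_iff.mpr hM, fun q hq hne hB => ?_⟩⟩
  · obtain ⟨r, rfl⟩ := hu
    have hr : psi u ≠ psi (u ++ r) := by simpa using hB
    simpa using hpos _ (psi_prefix_psi (List.prefix_append u r)) (by simpa using hne) hr
  · obtain ⟨u, r, hu, rfl, hr⟩ := exists_psi_append_of_prefix_psi hq
    have := hM.2.1 u hu
    rcases hr with rfl | hr
    · have := hpos u hu (by simpa using hne) (by rintro rfl; simp at hB)
      simpa using this
    · simp; omega

lemma typeRaw_psi_append (u v : List MStep) :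
    typeRaw (psi (u ++ v)) = typeRaw (psi u) ++ typeRaw (psi v) := by
  induction u with
  | nil => rfl
  | cons a u ih => cases a <;> simp [-psi_append, psi, typeRaw, ih]

lemma exists_typeRaw_append_N_cons (u : List MStep) :
    ∃ X, ∀ v, typeRaw (u ++ N :: v) = X ++ typeRaw (N :: v) := by
  induction u with
  | nil => exact ⟨[], fun _ => rfl⟩
  | cons a u ih =>
    obtain ⟨X, hX⟩ := ih
    cases a
    case N =>
      refine ⟨(if u.head? = some E then N else E) :: X, fun v => ?_⟩
      rw [List.cons_append, typeRaw, hX]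
      cases u <;> simp
    all_goals exact ⟨X, fun v => by simp [typeRaw, hX]⟩

lemma typeW_ne_of_move_after_N (u t w : List MStep) :
    typeW (u ++ [N] ++ [E] ++ (N :: t) ++ w) ≠ typeW (u ++ [N] ++ (N :: t) ++ [E] ++ w) := by
  obtain ⟨X, hX⟩ := exists_typeRaw_append_N_cons u
  simp [typeW, hX, typeRaw]

lemma IsDyck.exists_eq_N_cons {p : List MStep} (hp : IsDyck p) : ∃ t, p = N :: t := by
  obtain ⟨⟨hne, hpre, -⟩, hD⟩ := hp
  obtain ⟨a, t, rfl⟩ := List.exists_cons_of_ne_nil hne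
  have := hpre [a] (List.cons_prefix_cons.mpr ⟨rfl, List.nil_prefix⟩)
  cases a <;> simp_all [hdiff]

lemma psi_phi_of_isDyck {R : List MStep} (hR : IsDyck R) (hA : AvoidsNNN R) :
    psi (phi R) = R :=
  psi_phi R hR.2 hA hR.1.not_suffix_N

lemma dCover_of_mCover_phi {R S : List MStep} (hR : IsDyck R) (hS : IsDyck S)
    (hRa : AvoidsNNN R) (hSa : AvoidsNNN S) (h : MCover (phi R) (phi S)) :
    DCover R S ∧ typeW R = typeW S := by
  obtain ⟨A, B, C, hBM, hBP, hRABC, hSABC⟩ := h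
  have hR' : R = psi (A ++ [E] ++ B ++ C) := hRABC ▸ (psi_phi_of_isDyck hR hRa).symm
  have hS' : S = psi (A ++ B ++ [E] ++ C) := hSABC ▸ (psi_phi_of_isDyck hS hSa).symm
  refine ⟨⟨psi A, psi B, psi C, ⟨isMotzkin_psi_iff.mpr hBM, D_not_mem_psi B⟩,
    isPrimitive_psi_iff.mpr hBP, by simp [hR', psi], by simp [hS', psi]⟩, ?_⟩
  rw [typeW, typeW, hR', hS']
  simp only [typeRaw_psi_append]
  simp [psi, typeRaw]

lemma mCover_phi_of_dCover {R S : List MStep} (hR : IsDyck R) (hRa : AvoidsNNN R)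
    (h : DCover R S) (hT : typeW R = typeW S) : MCover (phi R) (phi S) := by
  obtain ⟨P₁, P₂, P₃, ⟨hP₂M, hP₂D⟩, hP₂P, rfl, rfl⟩ := h
  obtain ⟨t, rfl⟩ := IsDyck.exists_eq_N_cons ⟨hP₂M, hP₂D⟩
  by_cases hP₁ : [N] <:+ P₁
  · obtain ⟨u, rfl⟩ := hP₁
    exact absurd hT (typeW_ne_of_move_after_N u t P₃)
  have psi_phi_of_infix : ∀ P, P <:+: P₁ ++ [E] ++ (N :: t) ++ P₃ → ¬ [N] <:+ P →
      psi (phi P) = P := fun P hP hL =>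
    psi_phi P (fun h => hR.2 (hP.subset h)) (hRa.of_infix hP) hL
  have h₁ := psi_phi_of_infix P₁ ⟨[], [E] ++ N :: t ++ P₃, by simp⟩ hP₁
  have h₂ := psi_phi_of_infix _ (List.infix_append _ _ _) hP₂M.not_suffix_N
  have h₃ := psi_phi_of_infix P₃ (List.suffix_append _ _).isInfix
    fun h => hR.1.not_suffix_N (h.trans (List.suffix_append _ _))
  refine ⟨phi P₁, phi (N :: t), phi P₃, isMotzkin_psi_iff.mp (by rwa [h₂]),
    isPrimitive_psi_iff.mp (by rwa [h₂]), ?_, ?_⟩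
  all_goals
    conv_lhs =>
      rw [← h₁, ← h₂, ← h₃, show [E] = psi [E] from rfl]
      simp only [← psi_append, phi_psi]

theorem phi_cover_iff_general (R S : List MStep)
    (hR : IsDyck R) (hS : IsDyck S)
    (hRa : AvoidsNNN R) (hSa : AvoidsNNN S) :
    MCover (phi R) (phi S) ↔ (DCover R S ∧ typeW R = typeW S) :=
  ⟨dCover_of_mCover_phi hR hS hRa hSa, fun ⟨h, hT⟩ => mCover_phi_of_dCover hR hRa h hT⟩

/-- For Dyck paths `R, S` of the same length `2n` avoiding
`NNN`, the Motzkin path `φ S` covers `φ R` iff `S` covers `R` in the Tamari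
order and `Type(R) = Type(S)`. -/
theorem phi_cover_iff (n : ℕ) (R S : List MStep)
    (hR : IsDyck R) (hS : IsDyck S)
    (hRn : R.length = 2 * n) (hSn : S.length = 2 * n)
    (hRa : AvoidsNNN R) (hSa : AvoidsNNN S) :
    MCover (phi R) (phi S) ↔ (DCover R S ∧ typeW R = typeW S) :=
  phi_cover_iff_general R S hR hS hRa hSa
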